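/- Let A be a deterministic finite automaton and Z a terminal strongly connected component. Then L(A, 2^Z) = {ξ : Inf(A, ξ) ∩ Z ≠ ∅} = {w ∈ X^* : δ(s₀, w) ∈ Z} · X^ω; in particular this ω-language is open in the Cantor space X^ω. -/

import Mathlib

open Set

/-- `w` is a finite prefix of the infinite word `ξ`. -/
def InfPrefix {X : Type*} (w : List X) (ξ : ℕ → X) : Prop :=
  ∀ i : Fin w.length, w.get i = ξ i.val

/-- The set of finite prefixes of elements of `F`. -/
def Pref {X : Type*} (F : Set (ℕ → X)) : Set (List X) :=
  {w | ∃ ξ ∈ F, InfPrefix w ξ}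

/-- Concatenation of a finite word in front of an infinite word. -/
def wordCat {X : Type*} (w : List X) (ξ : ℕ → X) : ℕ → X :=
  fun n => if h : n < w.length then w.get ⟨n, h⟩ else ξ (n - w.length)


/-- A deterministic automaton with initial state and transition function. -/
structure DetAuto (X S : Type*) where
  start : S
  step : S → X → S

/-- The extension of the transition function to finite words. -/
def DetAuto.run {X S : Type*} (A : DetAuto X S) (s : S) (w : List X) : S :=
  w.foldl A.step s

/-- The state reached after reading the first `n` letters of `ξ`. -/
def DetAuto.statesAt {X S : Type*} (A : DetAuto X S) (ξ : ℕ → X) (n : ℕ) : S :=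
  A.run A.start (List.ofFn fun i : Fin n => ξ i.val)

/-- `Inf(A, ξ)`: the set of states visited infinitely often on input `ξ`. -/
def AInf {X S : Type*} (A : DetAuto X S) (ξ : ℕ → X) : Set S :=
  {s | ∀ n : ℕ, ∃ m ≥ n, A.statesAt ξ m = s}

/-- Muller acceptance: `L(A, T)`. -/
def Lang {X S : Type*} (A : DetAuto X S) (T : Set (Set S)) : Set (ℕ → X) :=
  {ξ | AInf A ξ ∈ T}

/-- `LOOP_A`: the set of realizable infinity sets. -/
def Loops {X S : Type*} (A : DetAuto X S) : Set (Set S) :=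
  {Z | ∃ ξ : ℕ → X, AInf A ξ = Z}

/-- Strongly connected components: the loops maximal w.r.t. inclusion, i.e.
any other loop is contained in them or disjoint from them. -/
def IsSCC {X S : Type*} (A : DetAuto X S) (Z : Set S) : Prop :=
  Z ∈ Loops A ∧ ∀ Z' ∈ Loops A, Z' ⊆ Z ∨ Z' ∩ Z = ∅

/-- The relation `Z₁ ↦ Z₂`. -/
def ReachRel {X S : Type*} (A : DetAuto X S) (Z₁ Z₂ : Set S) : Prop :=
  Z₁ ≠ Z₂ ∧ ∃ s ∈ Z₁, ∃ w : List X, A.run s w ∈ Z₂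

/-- Terminal strongly connected components. -/
def IsTerminalSCC {X S : Type*} (A : DetAuto X S) (Z : Set S) : Prop :=
  IsSCC A Z ∧ ∀ Z' : Set S, IsSCC A Z' → Z ≠ Z' → ¬ ReachRel A Z Z'

/-!
Maximality of `Z` among loops forces every infinity set either into `Z` or away from it, which
gives the first description. For the second, `Z` is closed under transitions: follow a path from
`z ∈ Z` to `s` and continue it forever. If the resulting infinity set lies in `Z`, then `z` and `s`
lie on a common cycle whose infinity set meets `Z`, so `s ∈ Z`; otherwise that infinity set sits in
another strongly connected component reachable from `Z`, contradicting terminality. Such a component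
exists because two loops sharing a state merge into one: run their cycles through that state in
turn. Finally `{w} · X^ω` is a basic open cylinder.
-/

open Filter

lemma frequently_atTop_mod_eq_iff {α : Type*} {f : ℕ → α} {p : ℕ} (hp : 0 < p) {a : α} :
    (∃ᶠ k in atTop, f (k % p) = a) ↔ ∃ r < p, f r = a := by
  constructor
  · intro h
    obtain ⟨k, hk⟩ := h.exists
    exact ⟨k % p, Nat.mod_lt k hp, hk⟩
  · rintro ⟨r, hr, rfl⟩
    refine frequently_atTop.2 fun n => ⟨r + p * n, ?_, ?_⟩
    · exact (Nat.le_mul_of_pos_left n hp).trans (Nat.le_add_left _ _)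
    · rw [Nat.add_mul_mod_self_left, Nat.mod_eq_of_lt hr]

section InfiniteWords

variable {X : Type*}

def wordTake (n : ℕ) (ξ : ℕ → X) : List X := List.ofFn fun i : Fin n => ξ i

def wordDrop (n : ℕ) (ξ : ℕ → X) : ℕ → X := fun i => ξ (n + i)

def wordCycle (c : List X) (hc : c ≠ []) : ℕ → X :=
  fun n => c.get ⟨n % c.length, Nat.mod_lt n (List.length_pos_iff.2 hc)⟩

@[simp] lemma length_wordTake (n : ℕ) (ξ : ℕ → X) : (wordTake n ξ).length = n :=
  List.length_ofFn

@[simp] lemma getElem_wordTake {n : ℕ} {ξ : ℕ → X} {i : ℕ} (hi : i < (wordTake n ξ).length) :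
    (wordTake n ξ)[i] = ξ i :=
  List.getElem_ofFn ..

lemma wordTake_add (m n : ℕ) (ξ : ℕ → X) :
    wordTake (m + n) ξ = wordTake m ξ ++ wordTake n (wordDrop m ξ) := by
  refine List.ext_getElem (by simp) fun i hi _ => ?_
  simp only [length_wordTake] at hi
  rcases lt_or_ge i m with h | h
  · simp [List.getElem_append_left, h]
  · obtain ⟨j, rfl⟩ := Nat.exists_eq_add_of_le h
    simp [List.getElem_append_right, wordDrop]

lemma take_wordTake {r n : ℕ} (h : r ≤ n) (ξ : ℕ → X) :
    (wordTake n ξ).take r = wordTake r ξ :=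
  List.ext_getElem (by simp [h]) fun i _ _ => by simp

lemma wordTake_length_wordCat (w : List X) (ξ : ℕ → X) : wordTake w.length (wordCat w ξ) = w :=
  List.ext_getElem (by simp) fun i hi _ => by simp_all [wordCat]

lemma wordDrop_length_wordCat (w : List X) (ξ : ℕ → X) : wordDrop w.length (wordCat w ξ) = ξ := by
  funext i
  simp [wordDrop, wordCat]

lemma wordCat_wordTake_wordDrop (n : ℕ) (ξ : ℕ → X) :
    wordCat (wordTake n ξ) (wordDrop n ξ) = ξ := by
  funext i
  by_cases h : i < n
  · simp [wordCat, h]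
  · simp [wordCat, h, wordDrop, Nat.add_sub_cancel' (not_lt.1 h)]

lemma wordTake_wordCycle {c : List X} (hc : c ≠ []) {k : ℕ} (hk : k ≤ c.length) :
    wordTake k (wordCycle c hc) = c.take k :=
  List.ext_getElem (by simp [hk]) fun i hi _ => by
    simp only [length_wordTake] at hi
    simp [wordCycle, Nat.mod_eq_of_lt (hi.trans_le hk)]

lemma wordDrop_length_wordCycle {c : List X} (hc : c ≠ []) :
    wordDrop c.length (wordCycle c hc) = wordCycle c hc := by
  funext i
  simp [wordDrop, wordCycle]

end InfiniteWords

namespace DetAuto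

variable {X S : Type*} (A : DetAuto X S)

lemma run_append (s : S) (u v : List X) : A.run s (u ++ v) = A.run (A.run s u) v :=
  List.foldl_append

lemma mem_aInf_iff {ξ : ℕ → X} {s : S} : s ∈ AInf A ξ ↔ ∃ᶠ n in atTop, A.statesAt ξ n = s :=
  frequently_atTop.symm

lemma statesAt_eq (ξ : ℕ → X) (n : ℕ) : A.statesAt ξ n = A.run A.start (wordTake n ξ) := rfl

lemma statesAt_add (ξ : ℕ → X) (m n : ℕ) :
    A.statesAt ξ (m + n) = A.run (A.statesAt ξ m) (wordTake n (wordDrop m ξ)) :=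
  (congrArg (A.run A.start) (wordTake_add m n ξ)).trans (A.run_append ..)

lemma mem_aInf_wordCat_iff {u : List X} {η : ℕ → X} {s : S} :
    s ∈ AInf A (wordCat u η) ↔ ∃ᶠ k in atTop, A.run (A.run A.start u) (wordTake k η) = s := by
  conv_lhs => rw [mem_aInf_iff, ← map_add_atTop_eq_nat u.length, frequently_map]
  simp_rw [add_comm _ u.length, statesAt_add, wordDrop_length_wordCat, statesAt_eq,
    wordTake_length_wordCat]

lemma exists_run_eq_of_mem_aInf {ξ : ℕ → X} {s : S} (hs : s ∈ AInf A ξ) :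
    ∃ u, A.run A.start u = s := by
  obtain ⟨m, -, hm⟩ := hs 0
  exact ⟨_, hm⟩

lemma eventually_statesAt_mem_aInf [Finite S] (ξ : ℕ → X) :
    ∀ᶠ n in atTop, A.statesAt ξ n ∈ AInf A ξ := by
  have h : ∀ s, ∀ᶠ n in atTop, A.statesAt ξ n = s → s ∈ AInf A ξ := by
    intro s
    by_cases hs : s ∈ AInf A ξ
    · exact .of_forall fun _ _ => hs
    · exact (not_frequently.1 ((A.mem_aInf_iff).not.1 hs)).mono fun _ hn h => (hn h).elim
  exact (eventually_all.2 h).mono fun n hn => hn _ rfl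

lemma aInf_nonempty [Finite S] (ξ : ℕ → X) : (AInf A ξ).Nonempty :=
  let ⟨_, hn⟩ := (A.eventually_statesAt_mem_aInf ξ).exists
  ⟨_, hn⟩

def visited (s : S) (c : List X) : Set S :=
  {t | ∃ r < c.length, A.run s (c.take r) = t}

lemma self_mem_visited {s : S} {c : List X} (hc : c ≠ []) : s ∈ A.visited s c :=
  ⟨0, List.length_pos_iff.2 hc, rfl⟩

lemma visited_append (s : S) (c₁ c₂ : List X) :
    A.visited s (c₁ ++ c₂) = A.visited s c₁ ∪ A.visited (A.run s c₁) c₂ := by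
  ext t
  constructor
  · rintro ⟨r, hr, rfl⟩
    rcases le_or_gt c₁.length r with h | h
    · refine .inr ⟨r - c₁.length, by simp at hr; omega, ?_⟩
      rw [List.take_append, List.take_of_length_le h, run_append]
    · exact .inl ⟨r, h, by rw [List.take_append_of_le_length h.le]⟩
  · rintro (⟨r, hr, rfl⟩ | ⟨r, hr, rfl⟩)
    · exact ⟨r, by simp; omega, by rw [List.take_append_of_le_length hr.le]⟩
    · refine ⟨c₁.length + r, by simp; omega, ?_⟩
      rw [List.take_append, List.take_of_length_le (by omega), run_append, Nat.add_sub_cancel_left]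

lemma run_wordTake_wordCycle {t : S} {c : List X} (hc : c ≠ []) (ht : A.run t c = t) (k : ℕ) :
    A.run t (wordTake k (wordCycle c hc)) = A.run t (c.take (k % c.length)) := by
  have hper : Function.Periodic (fun k => A.run t (wordTake k (wordCycle c hc))) c.length := by
    intro k
    dsimp only
    rw [add_comm, wordTake_add, run_append, wordTake_wordCycle hc le_rfl, List.take_length, ht,
      wordDrop_length_wordCycle]
  rw [← hper.map_mod_nat k]
  exact congrArg _ (wordTake_wordCycle hc (Nat.mod_lt _ (List.length_pos_iff.2 hc)).le)

lemma visited_mem_loops {u c : List X} {t : S} (hu : A.run A.start u = t) (hc : c ≠ [])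
    (ht : A.run t c = t) : A.visited t c ∈ Loops A := by
  refine ⟨wordCat u (wordCycle c hc), ext fun s => ?_⟩
  rw [mem_aInf_wordCat_iff, hu]
  simp_rw [A.run_wordTake_wordCycle hc ht]
  exact frequently_atTop_mod_eq_iff (f := fun r => A.run t (c.take r)) (List.length_pos_iff.2 hc)

lemma exists_cycle_visited_eq_aInf [Finite S] {ξ : ℕ → X} {t : S} (ht : t ∈ AInf A ξ) :
    ∃ c ≠ [], A.run t c = t ∧ A.visited t c = AInf A ξ := by
  obtain ⟨m, hmt, hm⟩ := ((A.mem_aInf_iff.1 ht).and_eventually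
    (eventually_forall_ge_atTop.2 (A.eventually_statesAt_mem_aInf ξ))).exists
  have hcover : ∀ᶠ m' in atTop, ∀ a, a ∈ AInf A ξ → ∃ k ∈ Ico m m', A.statesAt ξ k = a := by
    refine eventually_all.2 fun a => ?_
    by_cases ha : a ∈ AInf A ξ
    · obtain ⟨k, hk, rfl⟩ := ha m
      exact (eventually_gt_atTop k).mono fun m' hk' _ => ⟨k, ⟨hk, hk'⟩, rfl⟩
    · exact .of_forall fun _ h => (ha h).elim
  obtain ⟨m', hm't, hm'cover, hmm'⟩ := ((A.mem_aInf_iff.1 ht).and_eventually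
    (hcover.and (eventually_gt_atTop m))).exists
  have hrun : ∀ r, A.run t (wordTake r (wordDrop m ξ)) = A.statesAt ξ (m + r) := by
    intro r
    rw [statesAt_add, hmt]
  refine ⟨wordTake (m' - m) (wordDrop m ξ), ?_, ?_, ext fun s => ⟨?_, fun hs => ?_⟩⟩
  · exact List.ne_nil_of_length_pos (by simp; omega)
  · rw [hrun, Nat.add_sub_cancel' hmm'.le, hm't]
  · rintro ⟨r, hr, rfl⟩
    simp only [length_wordTake] at hr
    rw [take_wordTake hr.le, hrun]
    exact hm _ (by omega)
  · obtain ⟨k, ⟨hk, hk'⟩, rfl⟩ := hm'cover s hs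
    refine ⟨k - m, by simp; omega, ?_⟩
    rw [take_wordTake (by omega), hrun, Nat.add_sub_cancel' hk]

lemma exists_run_eq_of_mem_aInf_of_mem_aInf [Finite S] {ξ : ℕ → X} {a b : S}
    (ha : a ∈ AInf A ξ) (hb : b ∈ AInf A ξ) : ∃ q, A.run a q = b := by
  obtain ⟨c, -, -, hc⟩ := A.exists_cycle_visited_eq_aInf ha
  obtain ⟨r, -, hr⟩ := hc.symm ▸ hb
  exact ⟨_, hr⟩

lemma union_mem_loops [Finite S] {Y₁ Y₂ : Set S} (h₁ : Y₁ ∈ Loops A) (h₂ : Y₂ ∈ Loops A)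
    (hne : (Y₁ ∩ Y₂).Nonempty) : Y₁ ∪ Y₂ ∈ Loops A := by
  obtain ⟨t, ht₁, ht₂⟩ := hne
  obtain ⟨ξ₁, rfl⟩ := h₁
  obtain ⟨ξ₂, rfl⟩ := h₂
  obtain ⟨c₁, hc₁, hr₁, hv₁⟩ := A.exists_cycle_visited_eq_aInf ht₁
  obtain ⟨c₂, -, hr₂, hv₂⟩ := A.exists_cycle_visited_eq_aInf ht₂
  obtain ⟨u, hu⟩ := A.exists_run_eq_of_mem_aInf ht₁
  have hv := A.visited_append t c₁ c₂
  rw [hr₁, hv₁, hv₂] at hv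
  exact hv ▸ A.visited_mem_loops hu (List.append_ne_nil_of_left_ne_nil hc₁ _)
    (by rw [run_append, hr₁, hr₂])

lemma isSCC_of_maximal [Finite S] {Y : Set S} (hY : Maximal (· ∈ Loops A) Y) : IsSCC A Y := by
  refine ⟨hY.prop, fun Y' hY' => ?_⟩
  rcases (Y' ∩ Y).eq_empty_or_nonempty with h | h
  · exact .inr h
  · exact .inl (subset_union_left.trans
      (hY.2 (A.union_mem_loops hY' hY.prop h) subset_union_right))

lemma exists_isSCC_superset [Finite S] {Y : Set S} (hY : Y ∈ Loops A) :
    ∃ Y', IsSCC A Y' ∧ Y ⊆ Y' :=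
  let ⟨Y', hle, hmax⟩ := Finite.exists_le_maximal hY
  ⟨Y', A.isSCC_of_maximal hmax, hle⟩

lemma _root_.IsTerminalSCC.run_mem [Finite S] {A : DetAuto X S} {Z : Set S}
    (hZ : IsTerminalSCC A Z) {z : S} (hz : z ∈ Z) (w : List X) : A.run z w ∈ Z := by
  obtain ⟨⟨⟨ξ, rfl⟩, hmax⟩, hterm⟩ := hZ
  obtain ⟨u, hu⟩ := A.exists_run_eq_of_mem_aInf hz
  obtain ⟨t, ht⟩ := A.aInf_nonempty (wordCat (u ++ w) ξ)
  obtain ⟨p, hp⟩ : ∃ p, A.run (A.run z w) p = t := by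
    rw [mem_aInf_wordCat_iff, run_append, hu] at ht
    exact ⟨_, ht.exists.choose_spec⟩
  rcases hmax _ ⟨_, rfl⟩ with hsub | hdisj
  · rcases eq_or_ne w [] with rfl | hw
    · exact hz
    obtain ⟨q, hq⟩ := A.exists_run_eq_of_mem_aInf_of_mem_aInf (hsub ht) hz
    -- `s →p t →q z →w s` is a cycle through both `s` and `z`
    have hloop := A.visited_mem_loops (u := u ++ w) (c := p ++ q ++ w) (by rw [run_append, hu])
      (by simp [hw]) (by rw [run_append, run_append, hp, hq])
    have hzv : z ∈ A.visited (A.run z w) (p ++ q ++ w) := by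
      rw [visited_append, run_append, hp, hq]
      exact .inr (A.self_mem_visited hw)
    rcases hmax _ hloop with h | h
    · exact h (A.self_mem_visited (by simp [hw]))
    · exact (notMem_empty z (h ▸ ⟨hzv, hz⟩)).elim
  · obtain ⟨Y, hY, hsub⟩ := A.exists_isSCC_superset ⟨_, rfl⟩
    have hne : AInf A ξ ≠ Y := by
      rintro rfl
      exact notMem_empty t (hdisj ▸ ⟨ht, hsub ht⟩)
    exact (hterm Y hY hne ⟨hne, z, hz, w ++ p, by rw [run_append, hp]; exact hsub ht⟩).elim

lemma lang_subset_eq_aInf_inter_nonempty [Finite S] {Z : Set S} (hZ : IsSCC A Z) :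
    Lang A {Y | Y ⊆ Z} = {ξ | (AInf A ξ ∩ Z).Nonempty} := by
  ext ξ
  constructor
  · intro h
    obtain ⟨s, hs⟩ := A.aInf_nonempty ξ
    exact ⟨s, hs, h hs⟩
  · intro hs
    exact (hZ.2 _ ⟨ξ, rfl⟩).resolve_right hs.ne_empty

lemma lang_subset_eq_wordCat [Finite S] {Z : Set S} (hZ : IsTerminalSCC A Z) :
    Lang A {Y | Y ⊆ Z} =
      {η | ∃ w : List X, A.run A.start w ∈ Z ∧ ∃ ξ : ℕ → X, η = wordCat w ξ} := by
  ext η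
  constructor
  · intro h
    obtain ⟨s, hs⟩ := A.aInf_nonempty η
    obtain ⟨m, -, hm⟩ := hs 0
    exact ⟨wordTake m η, (hm ▸ h hs : A.statesAt η m ∈ Z), wordDrop m η,
      (wordCat_wordTake_wordDrop m η).symm⟩
  · rintro ⟨w, hw, ξ, rfl⟩ s hs
    obtain ⟨k, rfl⟩ := (A.mem_aInf_wordCat_iff.1 hs).exists
    exact hZ.run_mem hw _

end DetAuto

lemma range_wordCat {X : Type*} (w : List X) : range (wordCat w) = {η | InfPrefix w η} := by
  ext η
  constructor
  · rintro ⟨ξ, rfl⟩ i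
    simp [wordCat]
  · intro h
    have hw : wordTake w.length η = w :=
      List.ext_getElem (by simp) fun i _ hi => by simpa using (h ⟨i, hi⟩).symm
    have hcat := wordCat_wordTake_wordDrop w.length η
    rw [hw] at hcat
    exact ⟨_, hcat⟩

section Topology

variable {X : Type*} [TopologicalSpace X] [DiscreteTopology X]

lemma isOpen_range_wordCat (w : List X) : IsOpen (range (wordCat w)) := by
  simp only [range_wordCat, InfPrefix, ofPred_forall]
  exact isOpen_iInter_of_finite fun i =>
    (isOpen_discrete {x | w.get i = x}).preimage (continuous_apply i.val)

lemma isOpen_setOf_exists_wordCat (W : Set (List X)) :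
    IsOpen {η : ℕ → X | ∃ w, w ∈ W ∧ ∃ ξ, η = wordCat w ξ} := by
  have hunion : {η : ℕ → X | ∃ w, w ∈ W ∧ ∃ ξ, η = wordCat w ξ} = ⋃ w ∈ W, range (wordCat w) := by
    ext η
    simp [eq_comm]
  rw [hunion]
  exact isOpen_biUnion fun w _ => isOpen_range_wordCat w

end Topology

theorem lang_terminalSCC_open_general {X S : Type*} [Fintype S]
    [TopologicalSpace X] [DiscreteTopology X]
    (A : DetAuto X S) (Z : Set S) (hZ : IsTerminalSCC A Z) :
    Lang A {Y : Set S | Y ⊆ Z} = {ξ : ℕ → X | (AInf A ξ ∩ Z).Nonempty} ∧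
    Lang A {Y : Set S | Y ⊆ Z} =
      {η : ℕ → X | ∃ w : List X, A.run A.start w ∈ Z ∧
        ∃ ξ : ℕ → X, η = wordCat w ξ} ∧
    IsOpen (Lang A {Y : Set S | Y ⊆ Z}) := by
  have hcyl := A.lang_subset_eq_wordCat hZ
  refine ⟨A.lang_subset_eq_aInf_inter_nonempty hZ.1, hcyl, ?_⟩
  rw [hcyl]
  exact isOpen_setOf_exists_wordCat {w | A.run A.start w ∈ Z}

/-- For a terminal SCC Z, L(A, 2^Z) = {ξ : Inf(A,ξ) ∩ Z ≠ ∅}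
 = {w : δ(s₀,w) ∈ Z}·X^ω, an open set. -/
theorem lang_terminalSCC_open {X S : Type*} [Fintype X] [Fintype S]
    [TopologicalSpace X] [DiscreteTopology X]
    (A : DetAuto X S) (Z : Set S) (hZ : IsTerminalSCC A Z) :
    Lang A {Y : Set S | Y ⊆ Z} = {ξ : ℕ → X | (AInf A ξ ∩ Z).Nonempty} ∧
    Lang A {Y : Set S | Y ⊆ Z} =
      {η : ℕ → X | ∃ w : List X, A.run A.start w ∈ Z ∧
        ∃ ξ : ℕ → X, η = wordCat w ξ} ∧
    IsOpen (Lang A {Y : Set S | Y ⊆ Z}) :=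
  lang_terminalSCC_open_general A Z hZ
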